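/- Let d ≥ 3, λ > 0, η ≥ 0, and L = 2^N. There is a constant c₁ = c₁(d) > 0 such that for every integer R with 1 ≤ 2R + 1 ≤ L/2, μ^{+,per}_{L;λ,η}( φ_j > 0 for all j ∈ B_R ) ≤ exp( − c₁ R^d f^{per}_L(λ,η) ), where B_R = {j ∈ T_L^d : ‖j‖_∞ ≤ R}. -/

import Mathlib

open MeasureTheory Filter
open scoped Classical



/-- Nearest-neighbour adjacency on the torus `T_L^d = (ℤ/Lℤ)^d`. -/
def torusAdj (d L : ℕ) (i j : Fin d → ZMod L) : Prop :=
  ∃ k : Fin d, j = Function.update i k (i k + 1) ∨ j = Function.update i k (i k - 1)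

/-- The periodic Hamiltonian `H^{per}_{L;λ}(φ)`. -/
noncomputable def HamPer (d L : ℕ) [NeZero L] (lam : ℝ) (V : ℝ → ℝ)
    (ψ : (Fin d → ZMod L) → ℝ) : ℝ :=
  (1 / (8 * d)) * ∑ i, ∑ j, (if torusAdj d L i j then (ψ i - ψ j) ^ 2 else 0)
    + lam * ∑ i, V (ψ i)

/-- The a priori measure `∏_{i ∈ T_L^d} (dφ_i + η δ₀(dφ_i))` on the torus. -/
noncomputable def priorPer (d L : ℕ) [NeZero L] (η : ℝ) : Measure ((Fin d → ZMod L) → ℝ) :=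
  Measure.pi fun _ => (volume + ENNReal.ofReal η • Measure.dirac (0 : ℝ))

/-- Density `e^{-H^{per}_{L;λ}(φ)} 𝟙_{Ω₊}(φ)`. -/
noncomputable def densPer (d L : ℕ) [NeZero L] (lam : ℝ) (V : ℝ → ℝ)
    (φ : (Fin d → ZMod L) → ℝ) : ℝ :=
  if ∀ i, 0 ≤ φ i then Real.exp (-(HamPer d L lam V φ)) else 0

/-- The unnormalized Gibbs measure with hard wall, periodic boundary condition. -/
noncomputable def gibbsPer (d L : ℕ) [NeZero L] (lam η : ℝ) (V : ℝ → ℝ) :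
    Measure ((Fin d → ZMod L) → ℝ) :=
  (priorPer d L η).withDensity fun φ => ENNReal.ofReal (densPer d L lam V φ)

/-- The partition function `Z^{+,per}_{L;λ,η}`. -/
noncomputable def ZplusPer (d L : ℕ) [NeZero L] (lam η : ℝ) (V : ℝ → ℝ) : ℝ :=
  (gibbsPer d L lam η V Set.univ).toReal

/-- The restricted partition function `Z^{+,per}_{L;λ,η}[A]`. -/
noncomputable def ZplusPerIn (d L : ℕ) [NeZero L] (lam η : ℝ) (V : ℝ → ℝ)
    (A : Set ((Fin d → ZMod L) → ℝ)) : ℝ :=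
  (gibbsPer d L lam η V A).toReal

/-- The normalized Gibbs measure `μ^{+,per}_{L;λ,η}`. -/
noncomputable def muPer (d L : ℕ) [NeZero L] (lam η : ℝ) (V : ℝ → ℝ) :
    Measure ((Fin d → ZMod L) → ℝ) :=
  (gibbsPer d L lam η V Set.univ)⁻¹ • gibbsPer d L lam η V

/-- The periodic finite-volume free energy `f^{per}_L(λ,η)`. -/
noncomputable def freeEnergyPer (d L : ℕ) [NeZero L] (lam η : ℝ) (V : ℝ → ℝ) : ℝ :=
  ((L : ℝ) ^ d)⁻¹ * Real.log (ZplusPer d L lam η V / ZplusPer d L lam 0 V)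

/-- The generalized inverse `V⁻¹(y) = inf {x ≥ 0 : V(x) ≥ y}`. -/
noncomputable def Vinv (V : ℝ → ℝ) (y : ℝ) : ℝ :=
  sInf {x : ℝ | 0 ≤ x ∧ y ≤ V x}


/-- The ball `B_R = {j ∈ T_L^d : ‖j‖_∞ ≤ R}` on the torus: the set of sites all of whose
coordinates are represented by an integer of absolute value at most `R`. -/
def torusBall (d L R : ℕ) : Set (Fin d → ZMod L) :=
  {j | ∀ m, ∃ z : ℤ, z.natAbs ≤ R ∧ (z : ZMod L) = j m}

/-!
The Gibbs density is log-supermodular: under `φ, ψ ↦ φ ⊔ ψ, φ ⊓ ψ` the gradient energy can only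
decrease and the potential energy is unchanged. By the four functions theorem of Ahlswede and
Daykin the Gibbs measure therefore satisfies the FKG inequality for increasing events. The event
`{φ > 0 on B_R}` is increasing, and its translates by a set `S` of at most `(L / R)^d` centres
whose balls cover the torus all have the same probability, by translation invariance. Their
intersection forces `φ > 0` everywhere, so FKG gives
`μ(φ > 0 on B_R) ^ |S| ≤ μ(φ > 0) = Z_{L;λ,0} / Z_{L;λ,η} = exp (-L^d f_L(λ, η))`, the middle
identity holding because pinning gives no weight to strictly positive configurations. Taking
`|S|`-th roots yields the bound with `c₁ = 1`.
-/

open scoped ENNReal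

namespace ENNReal

lemma add_le_add_of_mul_le_mul {p q X Y : ℝ≥0∞} (hp : p ≤ Y) (hq : q ≤ Y)
    (hpq : p * q ≤ X * Y) : p + q ≤ X + Y := by
  rcases eq_or_ne Y ⊤ with rfl | hY
  · simp
  rcases eq_or_ne X ⊤ with rfl | hX
  · simp
  have hp' : p ≠ ⊤ := ne_top_of_le_ne_top hY hp
  have hq' : q ≠ ⊤ := ne_top_of_le_ne_top hY hq
  rcases eq_or_ne Y 0 with rfl | hY0
  · simp_all
  rw [← toReal_le_toReal (add_ne_top.2 ⟨hp', hq'⟩) (add_ne_top.2 ⟨hX, hY⟩),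
    toReal_add hp' hq', toReal_add hX hY]
  have hpr := toReal_mono hY hp
  have hqr := toReal_mono hY hq
  have hpqr : p.toReal * q.toReal ≤ X.toReal * Y.toReal := by
    simpa only [toReal_mul] using toReal_mono (mul_ne_top hX hY) hpq
  have hYr : 0 < Y.toReal := toReal_pos hY0 hY
  -- `(Y - p) (Y - q) ≥ 0` gives `(p + q) Y ≤ Y² + p q ≤ (X + Y) Y`.
  nlinarith [mul_nonneg (sub_nonneg.2 hpr) (sub_nonneg.2 hqr)]

end ENNReal

lemma le_exp_mul_log_of_pow_le {p q t : ℝ} {n : ℕ} (hp : 0 ≤ p) (hq : q ≤ 1) (hn : n ≠ 0)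
    (h : p ^ n ≤ q) (ht : n * t ≤ 1) : p ≤ Real.exp (t * Real.log q) := by
  rcases hp.eq_or_lt with rfl | hp
  · exact (Real.exp_pos _).le
  have hq0 : 0 < q := (pow_pos hp n).trans_le h
  have hn' : (0 : ℝ) < n := by positivity
  have hlogq : Real.log q ≤ 0 := Real.log_nonpos hq0.le hq
  have hlog : n * Real.log p ≤ Real.log q := by
    rw [← Real.log_pow]; exact Real.log_le_log (pow_pos hp n) h
  rw [← Real.exp_log hp]
  refine Real.exp_le_exp.2 ?_
  -- `log p ≤ log q / n ≤ t log q`, as `log q ≤ 0` and `t ≤ 1 / n`.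
  nlinarith

section FourFunctions

variable {α : Type*} [MeasurableSpace α] {ν : Measure α} {f₁ f₂ f₃ f₄ : α → ℝ≥0∞}

lemma lintegral_lintegral_mul_add_mul_swap (h₁ : Measurable f₁) (h₂ : Measurable f₂) :
    ∫⁻ s, ∫⁻ t, (f₁ s * f₂ t + f₁ t * f₂ s) ∂ν ∂ν
      = 2 * ((∫⁻ s, f₁ s ∂ν) * ∫⁻ s, f₂ s ∂ν) := by
  have inner : ∀ s, ∫⁻ t, (f₁ s * f₂ t + f₁ t * f₂ s) ∂ν
      = f₁ s * (∫⁻ t, f₂ t ∂ν) + (∫⁻ t, f₁ t ∂ν) * f₂ s := fun s => by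
    rw [lintegral_add_left (h₂.const_mul _), lintegral_const_mul _ h₂, lintegral_mul_const _ h₁]
  simp_rw [inner]
  rw [lintegral_add_left (h₁.mul_const _), lintegral_mul_const _ h₁, lintegral_const_mul _ h₂]
  ring

/-- On a linear order the pairs `(s, t)` and `(t, s)` are treated together: for `s ≤ t` the
hypothesis bounds both `f₁ s * f₂ t` and `f₁ t * f₂ s` by `f₃ s * f₄ t`, and their product by
`f₃ s * f₄ t * (f₃ t * f₄ s)`. -/
theorem lintegral_four_functions_theorem [LinearOrder α] (h₁ : Measurable f₁)
    (h₂ : Measurable f₂) (h₃ : Measurable f₃) (h₄ : Measurable f₄)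
    (h : ∀ s t, f₁ s * f₂ t ≤ f₃ (s ⊓ t) * f₄ (s ⊔ t)) :
    (∫⁻ s, f₁ s ∂ν) * (∫⁻ s, f₂ s ∂ν) ≤ (∫⁻ s, f₃ s ∂ν) * (∫⁻ s, f₄ s ∂ν) := by
  have two_point : ∀ s t, s ≤ t →
      f₁ s * f₂ t + f₁ t * f₂ s ≤ f₃ s * f₄ t + f₃ t * f₄ s := by
    intro s t hst
    have hst' := h s t
    have hts := h t s
    rw [inf_eq_left.2 hst, sup_eq_right.2 hst] at hst'
    rw [inf_eq_right.2 hst, sup_eq_left.2 hst] at hts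
    rw [add_comm (f₃ s * _)]
    refine ENNReal.add_le_add_of_mul_le_mul hst' hts ?_
    calc f₁ s * f₂ t * (f₁ t * f₂ s) = (f₁ s * f₂ s) * (f₁ t * f₂ t) := by ring
      _ ≤ (f₃ s * f₄ s) * (f₃ t * f₄ t) :=
        mul_le_mul' (by simpa using h s s) (by simpa using h t t)
      _ = f₃ t * f₄ s * (f₃ s * f₄ t) := by ring
  have symmetrized : ∀ s t, f₁ s * f₂ t + f₁ t * f₂ s ≤ f₃ s * f₄ t + f₃ t * f₄ s :=
    fun s t => (le_total s t).elim (two_point s t) fun hts => by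
      rw [add_comm, add_comm (f₃ s * _)]
      exact two_point t s hts
  rw [← ENNReal.mul_le_mul_iff_right two_ne_zero ENNReal.ofNat_ne_top,
    ← lintegral_lintegral_mul_add_mul_swap h₁ h₂, ← lintegral_lintegral_mul_add_mul_swap h₃ h₄]
  exact lintegral_mono fun s => lintegral_mono fun t => symmetrized s t

end FourFunctions

section FourFunctionsPi

variable {ι : Type*} {α : ι → Type*}

lemma Function.update_sup_update [DecidableEq ι] [∀ i, SemilatticeSup (α i)] (x y : ∀ i, α i)
    (i : ι) (a b : α i) :
    Function.update x i a ⊔ Function.update y i b = Function.update (x ⊔ y) i (a ⊔ b) :=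
  funext fun j => by obtain rfl | hji := eq_or_ne j i <;> simp [Function.update_of_ne, *]

lemma Function.update_inf_update [DecidableEq ι] [∀ i, SemilatticeInf (α i)] (x y : ∀ i, α i)
    (i : ι) (a b : α i) :
    Function.update x i a ⊓ Function.update y i b = Function.update (x ⊓ y) i (a ⊓ b) :=
  funext fun j => by obtain rfl | hji := eq_or_ne j i <;> simp [Function.update_of_ne, *]

variable [∀ i, MeasurableSpace (α i)] [∀ i, LinearOrder (α i)]
  {ν : ∀ i, Measure (α i)} [∀ i, SigmaFinite (ν i)] {f₁ f₂ f₃ f₄ : (∀ i, α i) → ℝ≥0∞}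

theorem lmarginal_four_functions_theorem [DecidableEq ι] (h₁ : Measurable f₁)
    (h₂ : Measurable f₂) (h₃ : Measurable f₃) (h₄ : Measurable f₄)
    (h : ∀ x y, f₁ x * f₂ y ≤ f₃ (x ⊓ y) * f₄ (x ⊔ y)) (s : Finset ι) (x y : ∀ i, α i) :
    lmarginal ν s f₁ x * lmarginal ν s f₂ y
      ≤ lmarginal ν s f₃ (x ⊓ y) * lmarginal ν s f₄ (x ⊔ y) := by
  induction s using Finset.induction_on generalizing x y with
  | empty => simpa using h x y
  | insert i s hi ih =>
    rw [lmarginal_insert _ h₁ hi, lmarginal_insert _ h₂ hi, lmarginal_insert _ h₃ hi,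
      lmarginal_insert _ h₄ hi]
    refine lintegral_four_functions_theorem ((h₁.lmarginal ν).comp (measurable_update _))
      ((h₂.lmarginal ν).comp (measurable_update _)) ((h₃.lmarginal ν).comp (measurable_update _))
      ((h₄.lmarginal ν).comp (measurable_update _)) fun a b => ?_
    simpa only [Function.update_inf_update, Function.update_sup_update] using
      ih (Function.update x i a) (Function.update y i b)

theorem lintegral_pi_four_functions_theorem [Fintype ι] (h₁ : Measurable f₁)
    (h₂ : Measurable f₂) (h₃ : Measurable f₃) (h₄ : Measurable f₄)
    (h : ∀ x y, f₁ x * f₂ y ≤ f₃ (x ⊓ y) * f₄ (x ⊔ y)) :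
    (∫⁻ x, f₁ x ∂Measure.pi ν) * (∫⁻ x, f₂ x ∂Measure.pi ν)
      ≤ (∫⁻ x, f₃ x ∂Measure.pi ν) * (∫⁻ x, f₄ x ∂Measure.pi ν) := by
  classical
  rcases isEmpty_or_nonempty (∀ i, α i) with _ | ⟨⟨x⟩⟩
  · simp
  simpa using lmarginal_four_functions_theorem (ν := ν) h₁ h₂ h₃ h₄ h Finset.univ x x

end FourFunctionsPi

section FKG

variable {β : Type*} [MeasurableSpace β] [Preorder β] {μ : Measure β}

/-- The FKG inequality for increasing events, in a form that is invariant under scaling `μ`. -/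
def HasFKG (μ : Measure β) : Prop :=
  ∀ ⦃A B : Set β⦄, MeasurableSet A → MeasurableSet B → IsUpperSet A → IsUpperSet B →
    μ A * μ B ≤ μ (A ∩ B) * μ Set.univ

lemma HasFKG.smul (hμ : HasFKG μ) (c : ℝ≥0∞) : HasFKG (c • μ) := by
  intro A B hA hB hA' hB'
  simp only [Measure.smul_apply, smul_eq_mul]
  calc c * μ A * (c * μ B) = c * c * (μ A * μ B) := by ring
    _ ≤ c * c * (μ (A ∩ B) * μ Set.univ) := mul_le_mul_right (hμ hA hB hA' hB') _
    _ = c * μ (A ∩ B) * (c * μ Set.univ) := by ring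

lemma HasFKG.prod_le_measure_biInter [IsZeroOrProbabilityMeasure μ] (hμ : HasFKG μ)
    {κ : Type*} {S : Finset κ} (hS : S.Nonempty) {A : κ → Set β}
    (hAm : ∀ k, MeasurableSet (A k)) (hA : ∀ k, IsUpperSet (A k)) :
    ∏ k ∈ S, μ (A k) ≤ μ (⋂ k ∈ S, A k) := by
  classical
  induction hS using Finset.Nonempty.cons_induction with
  | singleton a => simp
  | cons a S ha hS ih =>
    rw [Finset.prod_cons, Finset.cons_eq_insert, Finset.set_biInter_insert]
    calc μ (A a) * ∏ k ∈ S, μ (A k) ≤ μ (A a) * μ (⋂ k ∈ S, A k) := by gcongr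
      _ ≤ μ (A a ∩ ⋂ k ∈ S, A k) * μ Set.univ :=
        hμ (hAm a) (.biInter S.countable_toSet fun k _ => hAm k) (hA a)
          (isUpperSet_iInter₂ fun k _ => hA k)
      _ ≤ μ (A a ∩ ⋂ k ∈ S, A k) := mul_le_of_le_one_right' prob_le_one

theorem hasFKG_withDensity_pi {ι : Type*} [Fintype ι] {α : ι → Type*}
    [∀ i, MeasurableSpace (α i)] [∀ i, LinearOrder (α i)] (ν : ∀ i, Measure (α i))
    [∀ i, SigmaFinite (ν i)] {ρ : (∀ i, α i) → ℝ≥0∞} (hρm : Measurable ρ)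
    (hρ : ∀ x y, ρ x * ρ y ≤ ρ (x ⊓ y) * ρ (x ⊔ y)) :
    HasFKG ((Measure.pi ν).withDensity ρ) := by
  intro A B hA hB hA' hB'
  simp only [withDensity_apply' _, Measure.restrict_univ, ← lintegral_indicator hA,
    ← lintegral_indicator hB, ← lintegral_indicator (hA.inter hB)]
  rw [mul_comm _ (∫⁻ x, ρ x ∂_)]
  refine lintegral_pi_four_functions_theorem (hρm.indicator hA) (hρm.indicator hB) hρm
    (hρm.indicator (hA.inter hB)) fun x y => ?_
  by_cases hx : x ∈ A
  · by_cases hy : y ∈ B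
    · have hxy : x ⊔ y ∈ A ∩ B := ⟨hA' le_sup_left hx, hB' le_sup_right hy⟩
      simpa [hx, hy, hxy] using hρ x y
    · simp [hy]
  · simp [hx]

end FKG

lemma MeasureTheory.MeasurePreserving.withDensity_comp {α β : Type*} [MeasurableSpace α]
    [MeasurableSpace β] {μ : Measure α} {ν : Measure β} {T : α → β}
    (hT : MeasurePreserving T μ ν) {ρ : β → ℝ≥0∞} (hρ : Measurable ρ) :
    MeasurePreserving T (μ.withDensity (ρ ∘ T)) (ν.withDensity ρ) := by
  refine ⟨hT.measurable, Measure.ext fun A hA => ?_⟩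
  rw [Measure.map_apply hT.measurable hA, withDensity_apply _ (hT.measurable hA),
    withDensity_apply _ hA, ← hT.setLIntegral_comp_preimage hA hρ, Function.comp_def]

lemma MeasureTheory.measurePreserving_comp_equiv {ι β : Type*} [Fintype ι] [MeasurableSpace β]
    (ν : Measure β) [SigmaFinite ν] (e : ι ≃ ι) :
    MeasurePreserving (fun φ : ι → β => φ ∘ e) (Measure.pi fun _ => ν)
      (Measure.pi fun _ => ν) :=
  measurePreserving_arrowCongr' _ _ e.symm (MeasurableEquiv.refl β) fun _ => .id ν

instance (η : ℝ) : SigmaFinite (volume + ENNReal.ofReal η • Measure.dirac (0 : ℝ)) := by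
  have : IsFiniteMeasure (ENNReal.ofReal η • Measure.dirac (0 : ℝ)) := ⟨by simp⟩
  infer_instance

section LogSupermodular

variable {d L : ℕ} [NeZero L] {lam η : ℝ} {V : ℝ → ℝ}

lemma sq_sup_sub_sup_add_sq_inf_sub_inf_le (a a' b b' : ℝ) :
    (a ⊔ a' - b ⊔ b') ^ 2 + (a ⊓ a' - b ⊓ b') ^ 2 ≤ (a - b) ^ 2 + (a' - b') ^ 2 := by
  rcases le_total a a' with h | h <;> rcases le_total b b' with h' | h' <;>
    simp only [sup_of_le_left, sup_of_le_right, inf_of_le_left, inf_of_le_right, h, h'] <;>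
    nlinarith [mul_nonneg (sub_nonneg.2 h) (sub_nonneg.2 h')]

lemma hamPer_sup_add_hamPer_inf_le (φ ψ : (Fin d → ZMod L) → ℝ) :
    HamPer d L lam V (φ ⊔ ψ) + HamPer d L lam V (φ ⊓ ψ)
      ≤ HamPer d L lam V φ + HamPer d L lam V ψ := by
  have grad : (∑ i, ∑ j, if torusAdj d L i j then ((φ ⊔ ψ) i - (φ ⊔ ψ) j) ^ 2 else 0)
      + (∑ i, ∑ j, if torusAdj d L i j then ((φ ⊓ ψ) i - (φ ⊓ ψ) j) ^ 2 else 0)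
      ≤ (∑ i, ∑ j, if torusAdj d L i j then (φ i - φ j) ^ 2 else 0)
      + (∑ i, ∑ j, if torusAdj d L i j then (ψ i - ψ j) ^ 2 else 0) := by
    simp only [← Finset.sum_add_distrib]
    refine Finset.sum_le_sum fun i _ => Finset.sum_le_sum fun j _ => ?_
    split_ifs
    · exact sq_sup_sub_sup_add_sq_inf_sub_inf_le _ _ _ _
    · simp
  have pot : (∑ i, V ((φ ⊔ ψ) i)) + (∑ i, V ((φ ⊓ ψ) i)) = (∑ i, V (φ i)) + ∑ i, V (ψ i) := by
    simp only [← Finset.sum_add_distrib]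
    refine Finset.sum_congr rfl fun i _ => ?_
    rcases le_total (φ i) (ψ i) with h | h <;> simp [h, add_comm]
  have hc : (0 : ℝ) ≤ 1 / (8 * d) := by positivity
  unfold HamPer
  linear_combination mul_le_mul_of_nonneg_left grad hc + lam * pot

lemma densPer_mul_le (φ ψ : (Fin d → ZMod L) → ℝ) :
    ENNReal.ofReal (densPer d L lam V φ) * ENNReal.ofReal (densPer d L lam V ψ)
      ≤ ENNReal.ofReal (densPer d L lam V (φ ⊓ ψ))
        * ENNReal.ofReal (densPer d L lam V (φ ⊔ ψ)) := by
  unfold densPer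
  by_cases hφ : ∀ i, 0 ≤ φ i
  · by_cases hψ : ∀ i, 0 ≤ ψ i
    · have hinf : ∀ i, 0 ≤ (φ ⊓ ψ) i := fun i => le_inf (hφ i) (hψ i)
      have hsup : ∀ i, 0 ≤ (φ ⊔ ψ) i := fun i => le_sup_of_le_left (hφ i)
      rw [if_pos hφ, if_pos hψ, if_pos hinf, if_pos hsup, ← ENNReal.ofReal_mul (by positivity),
        ← ENNReal.ofReal_mul (by positivity), ← Real.exp_add, ← Real.exp_add]
      exact ENNReal.ofReal_le_ofReal <| Real.exp_le_exp.2 <| by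
        linarith [hamPer_sup_add_hamPer_inf_le (lam := lam) (V := V) φ ψ]
    · simp [hψ]
  · simp [hφ]

lemma measurable_densPer (hV : Measurable V) :
    Measurable fun φ => ENNReal.ofReal (densPer d L lam V φ) := by
  refine ENNReal.measurable_ofReal.comp (Measurable.ite ?_ ?_ measurable_const)
  · simp only [Set.ofPred_forall]
    exact .iInter fun i => measurableSet_le measurable_const (measurable_pi_apply i)
  · refine (Measurable.add (measurable_const.mul ?_) (measurable_const.mul ?_)).neg.exp
    · refine Finset.measurable_sum _ fun i _ => Finset.measurable_sum _ fun j _ => ?_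
      split_ifs <;> fun_prop
    · exact Finset.measurable_sum _ fun i _ => hV.comp (measurable_pi_apply i)

lemma hasFKG_muPer (hV : Measurable V) : HasFKG (muPer d L lam η V) :=
  (hasFKG_withDensity_pi _ (measurable_densPer hV) densPer_mul_le).smul _

instance : IsZeroOrProbabilityMeasure (muPer d L lam η V) := by
  unfold muPer
  infer_instance

end LogSupermodular

section Translation

variable {d L : ℕ}

lemma torusAdj_add_right {i j : Fin d → ZMod L} (v : Fin d → ZMod L) (h : torusAdj d L i j) :
    torusAdj d L (i + v) (j + v) := by
  obtain ⟨k, rfl | rfl⟩ := h <;> refine ⟨k, ?_⟩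
  · refine Or.inl (funext fun m => ?_)
    obtain rfl | hm := eq_or_ne m k <;> simp [Function.update_of_ne, *]
    ring
  · refine Or.inr (funext fun m => ?_)
    obtain rfl | hm := eq_or_ne m k <;> simp [Function.update_of_ne, *]
    ring

lemma torusAdj_add_right_iff {i j : Fin d → ZMod L} (v : Fin d → ZMod L) :
    torusAdj d L (i + v) (j + v) ↔ torusAdj d L i j :=
  ⟨fun h => by simpa using torusAdj_add_right (-v) h, torusAdj_add_right v⟩

variable [NeZero L] {lam η : ℝ} {V : ℝ → ℝ}

lemma hamPer_comp_add (v : Fin d → ZMod L) (φ : (Fin d → ZMod L) → ℝ) :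
    HamPer d L lam V (fun i => φ (i + v)) = HamPer d L lam V φ := by
  unfold HamPer
  congr 2
  · refine Fintype.sum_equiv (Equiv.addRight v) _ _ fun i => ?_
    refine Fintype.sum_equiv (Equiv.addRight v) _ _ fun j => ?_
    simp [torusAdj_add_right_iff]
  · exact Fintype.sum_equiv (Equiv.addRight v) _ _ fun i => rfl

lemma densPer_comp_add (v : Fin d → ZMod L) (φ : (Fin d → ZMod L) → ℝ) :
    densPer d L lam V (fun i => φ (i + v)) = densPer d L lam V φ := by
  have hpos : (∀ i, 0 ≤ φ (i + v)) ↔ ∀ i, 0 ≤ φ i :=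
    ⟨fun h i => by simpa using h (i - v), fun h i => h _⟩
  simp only [densPer, hamPer_comp_add, hpos]

lemma measurePreserving_muPer_comp_add (hV : Measurable V) (v : Fin d → ZMod L) :
    MeasurePreserving (fun φ i => φ (i + v)) (muPer d L lam η V) (muPer d L lam η V) := by
  have h := (measurePreserving_comp_equiv (volume + ENNReal.ofReal η • Measure.dirac 0)
    (Equiv.addRight v)).withDensity_comp (measurable_densPer (d := d) (L := L) (lam := lam) hV)
  simp only [Function.comp_def, Equiv.coe_addRight, densPer_comp_add] at h
  exact h.smul_measure _

end Translation

section PinningFree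

variable {d L : ℕ} [NeZero L] {lam η : ℝ} {V : ℝ → ℝ}

lemma restrict_Ioi_volume_add_smul_dirac (η : ℝ) :
    (volume + ENNReal.ofReal η • Measure.dirac (0 : ℝ)).restrict (Set.Ioi 0)
      = volume.restrict (Set.Ioi 0) := by
  have : (Measure.dirac (0 : ℝ)).restrict (Set.Ioi 0) = 0 := Measure.restrict_eq_zero.2 (by simp)
  rw [Measure.restrict_add, Measure.restrict_smul, this, smul_zero, add_zero]

/-- On `φ > 0` the pinning part of the a priori measure vanishes, and the resulting
restriction of Lebesgue measure to `φ > 0` is invisible to the hard-wall density up to the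
null set where some `φ i = 0`. -/
lemma gibbsPer_univ_pi_Ioi :
    gibbsPer d L lam η V (Set.univ.pi fun _ => Set.Ioi 0) = gibbsPer d L lam 0 V Set.univ := by
  have hsupp : (fun φ => ENNReal.ofReal (densPer d L lam V φ)).support ⊆ Set.Ici fun _ => 0 := by
    intro φ hφ
    by_contra h
    exact hφ (by simp [densPer, show ¬ ∀ i, 0 ≤ φ i from h])
  rw [gibbsPer, gibbsPer, withDensity_apply _ (.univ_pi fun _ => measurableSet_Ioi),
    withDensity_apply _ .univ, Measure.restrict_univ, priorPer, priorPer,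
    Measure.restrict_pi_pi]
  simp only [restrict_Ioi_volume_add_smul_dirac, ENNReal.ofReal_zero, zero_smul, add_zero]
  rw [← Measure.restrict_pi_pi, setLIntegral_congr Measure.univ_pi_Ioi_ae_eq_Ici,
    setLIntegral_eq_of_support_subset hsupp]

lemma muPer_univ_pi_Ioi_toReal :
    (muPer d L lam η V (Set.univ.pi fun _ => Set.Ioi 0)).toReal
      = ZplusPer d L lam 0 V / ZplusPer d L lam η V := by
  rw [muPer, Measure.smul_apply, smul_eq_mul, ENNReal.toReal_mul, ENNReal.toReal_inv,
    gibbsPer_univ_pi_Ioi, ZplusPer, ZplusPer, inv_mul_eq_div]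

lemma freeEnergyPer_eq_neg_log_muPer :
    freeEnergyPer d L lam η V
      = -(((L : ℝ) ^ d)⁻¹
        * Real.log (muPer d L lam η V (Set.univ.pi fun _ => Set.Ioi 0)).toReal) := by
  rw [muPer_univ_pi_Ioi_toReal, freeEnergyPer, ← inv_div, Real.log_inv, mul_neg]

end PinningFree

section Covering

lemma exists_natAbs_le_intCast_eq_sub_center (R : ℕ) {L : ℕ} [NeZero L] (x : ZMod L) :
    ∃ z : ℤ, z.natAbs ≤ R ∧
      (z : ZMod L) = x - ((x.val / (2 * R + 1) * (2 * R + 1) + R : ℕ) : ZMod L) := by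
  refine ⟨(x.val % (2 * R + 1) : ℕ) - R, ?_, ?_⟩
  · have := Nat.mod_lt x.val (show 0 < 2 * R + 1 by omega)
    omega
  · set q := x.val / (2 * R + 1)
    set r := x.val % (2 * R + 1)
    have hx : ((q * (2 * R + 1) + r : ℕ) : ZMod L) = x := by
      simp only [q, r, Nat.div_add_mod', ZMod.natCast_zmod_val]
    rw [eq_sub_iff_add_eq, ← hx]
    push_cast
    ring

lemma exists_torusBall_cover {d L R : ℕ} [NeZero L] (h : 2 * R + 1 ≤ L) :
    ∃ S : Finset (Fin d → ZMod L), S.card * R ^ d ≤ L ^ d ∧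
      ∀ u, ∃ v ∈ S, u - v ∈ torusBall d L R := by
  have hMR : (L / (2 * R + 1) + 1) * R ≤ L := by
    have := Nat.div_mul_le_self L (2 * R + 1)
    generalize L / (2 * R + 1) = k at this ⊢
    nlinarith
  set M := L / (2 * R + 1) + 1
  let center : Fin M → ZMod L := fun q => ((q * (2 * R + 1) + R : ℕ) : ZMod L)
  refine ⟨Finset.univ.image fun (s : Fin d → Fin M) k => center (s k), ?_, fun u => ?_⟩
  · calc (Finset.univ.image fun (s : Fin d → Fin M) k => center (s k)).card * R ^ d
        ≤ M ^ d * R ^ d := by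
          gcongr
          simpa using Finset.card_image_le (s := (Finset.univ : Finset (Fin d → Fin M)))
      _ ≤ L ^ d := by rw [← mul_pow]; exact Nat.pow_le_pow_left hMR d
  · have hq : ∀ k, (u k).val / (2 * R + 1) < M := fun k =>
      Nat.lt_succ_of_le (Nat.div_le_div_right (ZMod.val_lt (u k)).le)
    refine ⟨fun k => center ⟨_, hq k⟩, Finset.mem_image_of_mem _ (Finset.mem_univ _), ?_⟩
    exact fun k => exists_natAbs_le_intCast_eq_sub_center R (u k)

end Covering

lemma muPer_pow_card_le {d L R : ℕ} [NeZero L] {lam η : ℝ} {V : ℝ → ℝ} (hV : Measurable V)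
    {S : Finset (Fin d → ZMod L)} (hS : ∀ u, ∃ v ∈ S, u - v ∈ torusBall d L R) :
    muPer d L lam η V {φ | ∀ j ∈ torusBall d L R, 0 < φ j} ^ S.card
      ≤ muPer d L lam η V (Set.univ.pi fun _ => Set.Ioi 0) := by
  set A : Set ((Fin d → ZMod L) → ℝ) := {φ | ∀ j ∈ torusBall d L R, 0 < φ j}
  set T : (Fin d → ZMod L) → ((Fin d → ZMod L) → ℝ) → (Fin d → ZMod L) → ℝ :=
    fun v φ i => φ (i + v)
  have hA : MeasurableSet A := by
    have : A = ⋂ j ∈ torusBall d L R, (fun φ => φ j) ⁻¹' Set.Ioi 0 := by ext; simp [A]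
    exact this ▸ .biInter (Set.to_countable _) fun j _ => measurable_pi_apply j measurableSet_Ioi
  have hAup : IsUpperSet A := fun φ ψ hle hφ j hj => (hφ j hj).trans_le (hle j)
  have hT := measurePreserving_muPer_comp_add (d := d) (L := L) (lam := lam) (η := η) hV
  have hcover : (⋂ v ∈ S, T v ⁻¹' A) ⊆ Set.univ.pi fun _ => Set.Ioi 0 := by
    intro φ hφ u _
    obtain ⟨v, hv, huv⟩ := hS u
    simpa [T] using Set.mem_iInter₂.1 hφ v hv (u - v) huv
  obtain ⟨v₀, hv₀, -⟩ := hS 0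
  calc muPer d L lam η V A ^ S.card = ∏ v ∈ S, muPer d L lam η V (T v ⁻¹' A) := by
        rw [Finset.prod_congr rfl fun v _ => (hT v).measure_preimage hA.nullMeasurableSet,
          Finset.prod_const]
    _ ≤ muPer d L lam η V (⋂ v ∈ S, T v ⁻¹' A) :=
        (hasFKG_muPer hV).prod_le_measure_biInter ⟨v₀, hv₀⟩ (fun v => (hT v).measurable hA)
          fun v => hAup.preimage fun φ ψ hle i => hle (i + v)
    _ ≤ _ := measure_mono hcover

/-- Chessboard estimate on the probability of no pinned site in a box, `d ≥ 3`: there is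
`c₁ = c₁(d) > 0` such that for `λ > 0`, `η ≥ 0`, `L = 2^N` and `1 ≤ 2R+1 ≤ L/2`,
`μ^{+,per}_{L;λ,η}(φ_j > 0 ∀ j ∈ B_R) ≤ exp(-c₁ R^d f^{per}_L(λ,η))`. -/
theorem muPer_no_pinned_site_in_ball_high_d
    (d : ℕ) :
    ∃ c₁ > (0 : ℝ),
      ∀ (V : ℝ → ℝ), (∀ x, V (-x) = V x) → ConvexOn ℝ Set.univ V → V ≠ 0 → V 0 = 0 →
      ∀ lam : ℝ, 0 < lam → ∀ η : ℝ, 0 ≤ η →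
      ∀ L N : ℕ, ∀ hLN : L = 2 ^ N,
      ∀ R : ℕ, 1 ≤ 2 * R + 1 → 2 * R + 1 ≤ L / 2 →
        (@muPer d L ⟨by rw [hLN]; exact (Nat.two_pow_pos N).ne'⟩ lam η V
            {φ | ∀ j ∈ torusBall d L R, 0 < φ j}).toReal ≤
          Real.exp (-(c₁ * (R : ℝ) ^ d *
            @freeEnergyPer d L ⟨by rw [hLN]; exact (Nat.two_pow_pos N).ne'⟩ lam η V)) := by
  refine ⟨1, one_pos, fun V _ hVconv _ _ lam _ η _ L N hLN R _ hRL => ?_⟩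
  have : NeZero L := ⟨by rw [hLN]; exact (Nat.two_pow_pos N).ne'⟩
  have hV : Measurable V := (continuousOn_univ.mp (hVconv.continuousOn isOpen_univ)).measurable
  obtain ⟨S, hScard, hScover⟩ := exists_torusBall_cover (d := d) (show 2 * R + 1 ≤ L by omega)
  obtain ⟨v₀, hv₀, -⟩ := hScover 0
  have hpow := muPer_pow_card_le (lam := lam) (η := η) hV hScover
  have hL : (0 : ℝ) < (L : ℝ) ^ d := pow_pos (Nat.cast_pos.2 (NeZero.pos L)) d
  show (muPer d L lam η V _).toReal ≤ Real.exp (-(1 * (R : ℝ) ^ d * freeEnergyPer d L lam η V))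
  rw [freeEnergyPer_eq_neg_log_muPer]
  convert le_exp_mul_log_of_pow_le (t := (R : ℝ) ^ d * ((L : ℝ) ^ d)⁻¹)
    (q := (muPer d L lam η V (Set.univ.pi fun _ => Set.Ioi 0)).toReal) ENNReal.toReal_nonneg
    measureReal_le_one (Finset.card_ne_zero.2 ⟨v₀, hv₀⟩)
    (by rw [← ENNReal.toReal_pow]; exact ENNReal.toReal_mono (measure_ne_top _ _) hpow)
    ?_ using 2
  · ring
  · rw [← mul_assoc, ← div_eq_mul_inv, div_le_one hL]
    exact_mod_cast hScard
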